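/- Let d ≥ 1, L ∈ [0,∞), a ∈ ℝ, b ∈ (a,∞), r ∈ (0,∞), and let f : [a,b]^d → ℝ satisfy |f(u) − f(v)| ≤ L‖u − v‖₁ for all u, v ∈ [a,b]^d. Then there exist K ∈ ℕ with 1 ≤ K ≤ (⌈ d/(2r) ⌉)^d and points x_1, …, x_K ∈ [a,b]^d such that for every x ∈ [a,b]^d, | max_{1≤k≤K} (f(x_k) − L‖x − x_k‖₁) − f(x) | ≤ 2L(b − a)r. -/

import Mathlib

/-!
Cut `[a,b]` into `N = ⌈d/(2r)⌉` intervals of length `h = (b-a)/N` and take as centres the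
`N^d` midpoints of the resulting subcubes. Every point of the cube lies within `ℓ1`-distance
`d h / 2 ≤ (b-a) r` of some centre. For any centres, Lipschitz continuity gives
`f(x_k) - L‖x - x_k‖ ≤ f(x)`, so the maximum convolution lies below `f`, while the term of a
centre `x_k` within distance `δ` of `x` is at least `f(x) - 2Lδ`.
-/

open Finset

section MaxConv

variable {ι α : Type*}

/-- The maximum convolution `Φ`, with an arbitrary cost `D` in place of the `ℓ1` distance. -/
noncomputable def maxConv (D : α → α → ℝ) (L : ℝ) (pts : ι → α) (f : α → ℝ) (x : α) : ℝ :=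
  ⨆ k, (f (pts k) - L * D x (pts k))

variable {D : α → α → ℝ} {L : ℝ} {pts : ι → α} {f : α → ℝ} {x : α}

theorem maxConv_le [Nonempty ι] (hf : ∀ k, |f x - f (pts k)| ≤ L * D x (pts k)) :
    maxConv D L pts f x ≤ f x :=
  ciSup_le fun k => by linarith [(abs_le.mp (hf k)).1]

theorem sub_two_mul_le_maxConv [Finite ι] (hf : ∀ k, |f x - f (pts k)| ≤ L * D x (pts k))
    (k : ι) :
    f x - 2 * (L * D x (pts k)) ≤ maxConv D L pts f x :=
  le_ciSup_of_le (Finite.bddAbove_range _) k (by linarith [(abs_le.mp (hf k)).2])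

theorem abs_maxConv_sub_le [Finite ι] (hL : 0 ≤ L)
    (hf : ∀ k, |f x - f (pts k)| ≤ L * D x (pts k)) {δ : ℝ} (k : ι) (hk : D x (pts k) ≤ δ) :
    |maxConv D L pts f x - f x| ≤ 2 * L * δ := by
  have : Nonempty ι := ⟨k⟩
  have hLk : L * D x (pts k) ≤ L * δ := mul_le_mul_of_nonneg_left hk hL
  have hLδ : 0 ≤ L * δ := (abs_nonneg _).trans ((hf k).trans hLk)
  rw [abs_le]
  constructor
  · linarith [sub_two_mul_le_maxConv hf k]
  · linarith [maxConv_le hf]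

end MaxConv

noncomputable def gridMidpoint (a b : ℝ) (N j : ℕ) : ℝ :=
  a + (j + 1 / 2) * ((b - a) / N)

theorem gridMidpoint_mem_Icc {a b : ℝ} (hab : a ≤ b) {N j : ℕ} (hj : j < N) :
    gridMidpoint a b N j ∈ Set.Icc a b := by
  have hN : (0 : ℝ) < N := by exact_mod_cast (Nat.zero_le j).trans_lt hj
  have hjN : (j : ℝ) + 1 ≤ N := by exact_mod_cast hj
  have hh : 0 ≤ (b - a) / N := div_nonneg (sub_nonneg.mpr hab) hN.le
  have hNh : (N : ℝ) * ((b - a) / N) = b - a := mul_div_cancel₀ _ hN.ne'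
  unfold gridMidpoint
  constructor <;> nlinarith

/-- Capping the floor at `N - 1` keeps the right endpoint `s = N` inside the last interval. -/
theorem exists_lt_le_le_add_one {s : ℝ} {N : ℕ} (hN : 0 < N) (hs₀ : 0 ≤ s) (hsN : s ≤ N) :
    ∃ j < N, (j : ℝ) ≤ s ∧ s ≤ j + 1 := by
  refine ⟨min ⌊s⌋₊ (N - 1), by omega, ?_, ?_⟩
  · exact (Nat.cast_le.mpr (min_le_left _ _)).trans (Nat.floor_le hs₀)
  · rcases le_total ⌊s⌋₊ (N - 1) with h | h
    · rw [min_eq_left h]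
      exact (Nat.lt_floor_add_one s).le
    · rw [min_eq_right h, Nat.cast_sub hN, Nat.cast_one, sub_add_cancel]
      exact hsN

theorem exists_abs_sub_gridMidpoint_le {a b t : ℝ} (hab : a < b) (ht : t ∈ Set.Icc a b) {N : ℕ}
    (hN : 0 < N) : ∃ j < N, |t - gridMidpoint a b N j| ≤ (b - a) / (2 * N) := by
  set h := (b - a) / N
  have hh : 0 < h := div_pos (sub_pos.mpr hab) (by exact_mod_cast hN)
  have hNh : (N : ℝ) * h = b - a := mul_div_cancel₀ _ (by exact_mod_cast hN.ne')
  obtain ⟨j, hjN, hjs, hsj⟩ := exists_lt_le_le_add_one (s := (t - a) / h) hN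
    (div_nonneg (sub_nonneg.mpr ht.1) hh.le)
    (by rw [div_le_iff₀ hh, hNh]; linarith [ht.2])
  rw [le_div_iff₀ hh] at hjs
  rw [div_le_iff₀ hh] at hsj
  refine ⟨j, hjN, ?_⟩
  rw [show (b - a) / (2 * N) = h / 2 by ring, abs_le]
  unfold gridMidpoint
  constructor <;> nlinarith

theorem exists_sum_abs_sub_gridMidpoint_le {ι : Type*} [Fintype ι] {a b : ℝ} (hab : a < b)
    {x : ι → ℝ} (hx : ∀ i, x i ∈ Set.Icc a b) {N : ℕ} (hN : ∀ _ : ι, 0 < N) :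
    ∃ j : ι → Fin N,
      ∑ i, |x i - gridMidpoint a b N (j i)| ≤ Fintype.card ι * ((b - a) / (2 * N)) := by
  choose j hjN hj using fun i => exists_abs_sub_gridMidpoint_le hab (hx i) (hN i)
  refine ⟨fun i => ⟨j i, hjN i⟩, ?_⟩
  simpa using Finset.sum_le_card_nsmul univ _ _ fun i _ => hj i

theorem div_two_mul_ceil_div_le (x : ℝ) {r : ℝ} (hr : 0 < r) :
    x / (2 * ⌈x / (2 * r)⌉₊) ≤ r := by
  rcases Nat.eq_zero_or_pos ⌈x / (2 * r)⌉₊ with hN | hN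
  · simp [hN, hr.le]
  · rw [div_le_iff₀ (by positivity)]
    have := Nat.le_ceil (x / (2 * r))
    rw [div_le_iff₀ (by positivity)] at this
    linarith

theorem maxConv_cube_approx_general (d : ℕ) (L : ℝ) (hL : 0 ≤ L)
    (a b : ℝ) (hab : a < b) (r : ℝ) (hr : 0 < r) (f : (Fin d → ℝ) → ℝ)
    (hf : ∀ u, (∀ i, u i ∈ Set.Icc a b) → ∀ v, (∀ i, v i ∈ Set.Icc a b) →
      |f u - f v| ≤ L * ∑ i, |u i - v i|) :
    ∃ K : ℕ, 1 ≤ K ∧ K ≤ (⌈(d : ℝ) / (2 * r)⌉₊) ^ d ∧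
      ∃ pts : Fin K → (Fin d → ℝ), (∀ k, ∀ i, pts k i ∈ Set.Icc a b) ∧
        ∀ x : Fin d → ℝ, (∀ i, x i ∈ Set.Icc a b) →
          |(⨆ k : Fin K, (f (pts k) - L * ∑ i, |x i - pts k i|)) - f x| ≤
            2 * L * (b - a) * r := by
  set N := ⌈(d : ℝ) / (2 * r)⌉₊
  -- For `d = 0` we get `N = 0`, but `Fin (N ^ d)` still has an element.
  have hN (i : Fin d) : 0 < N :=
    Nat.ceil_pos.mpr (div_pos (by exact_mod_cast i.pos) (by positivity))
  let pts : Fin (N ^ d) → Fin d → ℝ :=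
    fun k i => gridMidpoint a b N (finFunctionFinEquiv.symm k i)
  have hpts (k) (i) : pts k i ∈ Set.Icc a b := gridMidpoint_mem_Icc hab.le (Fin.is_lt _)
  refine ⟨N ^ d, (finFunctionFinEquiv fun i => ⟨0, hN i⟩).pos, le_rfl, pts, hpts, fun x hx => ?_⟩
  obtain ⟨j, hj⟩ := exists_sum_abs_sub_gridMidpoint_le hab hx hN
  change |maxConv (fun x y => ∑ i, |x i - y i|) L pts f x - f x| ≤ _
  rw [mul_assoc _ (b - a)]
  refine abs_maxConv_sub_le hL (fun k => hf x hx _ (hpts k)) (finFunctionFinEquiv j) ?_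
  calc ∑ i, |x i - pts (finFunctionFinEquiv j) i|
      _ ≤ d * ((b - a) / (2 * N)) := by
        simpa only [pts, Equiv.symm_apply_apply, Fintype.card_fin] using hj
      _ = (b - a) * (d / (2 * N)) := by ring
      _ ≤ (b - a) * r :=
        mul_le_mul_of_nonneg_left (div_two_mul_ceil_div_le _ hr) (sub_nonneg.mpr hab.le)

/-- Maximum-convolution approximation on the cube with explicitly bounded number of
centers: for an ℓ1-`L`-Lipschitz `f` on `[a,b]^d` and `r > 0`, there are
`K ≤ ⌈d/(2r)⌉^d` centers in `[a,b]^d` whose maximum convolution approximates `f`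
uniformly within `2L(b−a)r`. -/
theorem maxConv_cube_approx (d : ℕ) (hd : 1 ≤ d) (L : ℝ) (hL : 0 ≤ L)
    (a b : ℝ) (hab : a < b) (r : ℝ) (hr : 0 < r) (f : (Fin d → ℝ) → ℝ)
    (hf : ∀ u, (∀ i, u i ∈ Set.Icc a b) → ∀ v, (∀ i, v i ∈ Set.Icc a b) →
      |f u - f v| ≤ L * ∑ i, |u i - v i|) :
    ∃ K : ℕ, 1 ≤ K ∧ K ≤ (⌈(d : ℝ) / (2 * r)⌉₊) ^ d ∧
      ∃ pts : Fin K → (Fin d → ℝ), (∀ k, ∀ i, pts k i ∈ Set.Icc a b) ∧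
        ∀ x : Fin d → ℝ, (∀ i, x i ∈ Set.Icc a b) →
          |(⨆ k : Fin K, (f (pts k) - L * ∑ i, |x i - pts k i|)) - f x| ≤
            2 * L * (b - a) * r :=
  maxConv_cube_approx_general d L hL a b hab r hr f hf
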